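/- arXiv:2409.08785 — 3 statements merged into one kernel-verified Lean document; each statement's English description precedes it below -/
import Mathlib

section
/- In the ring of Witt vectors $W(\mathbb{F}_p[X^{1/p^\infty}, Y^{1/p^\infty}])$, write $[X] - [Y] = \sum_{n \geq 0} [P_n(X,Y)] p^n$ with $P_n(X,Y) \in \mathbb{F}_p[X^{1/p^\infty}, Y^{1/p^\infty}]$. Then $P_n(X,Y) \in \mathbb{F}_p[X^{1/p^n}, Y^{1/p^n}]$ and $X^{1/p^n} - Y^{1/p^n}$ divides $P_n(X,Y)$. -/
open WittVector

/-- The compatible `p^n`-th root `x^{1/p^n}` of an element of a perfect ring of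
characteristic `p`, given by iterating the inverse of the Frobenius equivalence. -/
noncomputable def pRoot (p : ℕ) {R : Type*} [CommRing R] [Fact p.Prime] [CharP R p]
    [PerfectRing R p] (n : ℕ) (x : R) : R :=
  (⇑(frobeniusEquiv R p).symm)^[n] x

/-!
Evaluating `[C x] - [X] ∈ W(R[X])` at `X = x` shows that the `n`-th Witt coefficient of
`[x] - [z]`, as a polynomial in `z`, is divisible by `z - x`; running this inside the subring
generated by `x` and `y` gives `([x] - [y])ₙ = (x - y) c` with `c ∈ ℤ[x, y]`. In characteristic
`p` the `n`-th Witt coefficient of `∑ pⁱ [Pᵢ]` is `Pₙ ^ pⁿ`, so applying the ring automorphism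
`Frob⁻ⁿ` gives `Pₙ = (x^{1/pⁿ} - y^{1/pⁿ}) · c^{1/pⁿ}`.
-/

namespace WittVector

variable {p : ℕ} [Fact p.Prime] {R : Type*} [CommRing R]

theorem coeff_sum_pow_mul_teichmuller [CharP R p] (b : ℕ → R) {S : Finset ℕ} {n : ℕ}
    (hn : n ∈ S) :
    (∑ i ∈ S, (p : WittVector p R) ^ i * teichmuller p (b i)).coeff n = b n ^ p ^ n := by
  simp_rw [mul_comm ((p : WittVector p R) ^ _)]
  rw [sum_coeff_eq_coeff_sum, Finset.sum_eq_single_of_mem n hn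
      fun i _ hi ↦ teichmuller_mul_pow_coeff_of_ne _ hi.symm, teichmuller_mul_pow_coeff]
  intro m
  refine ⟨fun ⟨i, _, hi⟩ ⟨j, _, hj⟩ ↦ Subtype.ext ?_⟩
  exact (not_imp_comm.mp (teichmuller_mul_pow_coeff_of_ne _) hi).symm.trans
    (not_imp_comm.mp (teichmuller_mul_pow_coeff_of_ne _) hj)

theorem exists_coeff_teichmuller_sub_eq_sub_mul (x y : R) (n : ℕ) :
    ∃ c, (teichmuller p x - teichmuller p y).coeff n = (x - y) * c := by
  let w : WittVector p (Polynomial R) := teichmuller p (.C x) - teichmuller p .X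
  have hw (z : R) : (w.coeff n).eval z = (teichmuller p x - teichmuller p z).coeff n := by
    simpa only [Polynomial.coe_evalRingHom, map_sub, map_teichmuller, Polynomial.eval_C,
      Polynomial.eval_X, w] using (map_coeff (Polynomial.evalRingHom z) w n).symm
  obtain ⟨c, hc⟩ := Polynomial.dvd_iff_isRoot.mpr <| show (w.coeff n).IsRoot x by
    rw [Polynomial.IsRoot, hw, sub_self, zero_coeff]
  refine ⟨-c.eval y, ?_⟩
  rw [← hw, hc, Polynomial.eval_mul, Polynomial.eval_sub, Polynomial.eval_X, Polynomial.eval_C]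
  ring

theorem exists_mem_closure_coeff_teichmuller_sub_eq_sub_mul (x y : R) (n : ℕ) :
    ∃ c ∈ Subring.closure {x, y},
      (teichmuller p x - teichmuller p y).coeff n = (x - y) * c := by
  let S := Subring.closure {x, y}
  let xS : S := ⟨x, Subring.subset_closure (by simp)⟩
  let yS : S := ⟨y, Subring.subset_closure (by simp)⟩
  obtain ⟨c, hc⟩ := exists_coeff_teichmuller_sub_eq_sub_mul (p := p) xS yS n
  refine ⟨c, c.2, ?_⟩
  have h := map_coeff S.subtype (teichmuller p xS - teichmuller p yS) n
  rw [hc] at h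
  simpa only [map_sub, map_teichmuller, Subring.subtype_apply, Subring.coe_mul,
    AddSubgroupClass.coe_sub] using h

end WittVector

theorem RingHom.apply_mem_closure_pair {A B : Type*} [Ring A] [Ring B] (f : A →+* B)
    {x y c : A} (hc : c ∈ Subring.closure {x, y}) : f c ∈ Subring.closure {f x, f y} := by
  rw [← Set.image_pair, ← RingHom.map_closure]
  exact Subring.mem_map.mpr ⟨c, hc, rfl⟩

section pRoot

variable {p : ℕ} [Fact p.Prime] {R : Type*} [CommRing R] [CharP R p] [PerfectRing R p]

theorem pRoot_eq_iterateFrobeniusEquiv_symm (n : ℕ) :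
    pRoot p n = ⇑(iterateFrobeniusEquiv R p n).symm := by
  rw [iterateFrobeniusEquiv_symm, RingAut.coe_pow]
  rfl

theorem pRoot_pow_p_pow (n : ℕ) (a : R) : pRoot p n (a ^ p ^ n) = a := by
  rw [pRoot_eq_iterateFrobeniusEquiv_symm, ← iterateFrobeniusEquiv_def, RingEquiv.symm_apply_apply]

end pRoot

/-- In the ring of Witt vectors of a perfect ring `R` of characteristic
`p` (e.g. the perfect polynomial ring `𝔽_p[X^{1/p^∞}, Y^{1/p^∞}]`, with `x = X`, `y = Y`),
write `[x] - [y] = ∑_{n ≥ 0} [P n] pⁿ` (the Teichmüller expansion, characterized by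
agreement of all truncations with the partial sums). Then each `P n` lies in the subring
generated by `x^{1/pⁿ}` and `y^{1/pⁿ}` (the analogue of `𝔽_p[X^{1/pⁿ}, Y^{1/pⁿ}]`), and
`x^{1/pⁿ} - y^{1/pⁿ}` divides `P n` in that subring. -/
theorem stmt5 (p : ℕ) [Fact p.Prime] (R : Type*) [CommRing R] [CharP R p] [PerfectRing R p]
    (x y : R) (P : ℕ → R)
    (hP : ∀ N : ℕ,
      WittVector.truncate N (teichmuller p x - teichmuller p y) =
        WittVector.truncate N
          (∑ i ∈ Finset.range N, (p : WittVector p R) ^ i * teichmuller p (P i))) :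
    ∀ n : ℕ,
      P n ∈ Subring.closure {pRoot p n x, pRoot p n y} ∧
        ∃ c ∈ Subring.closure {pRoot p n x, pRoot p n y},
          P n = (pRoot p n x - pRoot p n y) * c := by
  intro n
  have hcoeff : (teichmuller p x - teichmuller p y).coeff n = P n ^ p ^ n := by
    have h := congrArg (TruncatedWittVector.coeff ⟨n, n.lt_succ_self⟩) (hP (n + 1))
    rwa [coeff_truncate, coeff_truncate,
      coeff_sum_pow_mul_teichmuller P (Finset.self_mem_range_succ n)] at h
  obtain ⟨c, hc, hfactor⟩ := exists_mem_closure_coeff_teichmuller_sub_eq_sub_mul (p := p) x y n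
  let φ : R →+* R := (iterateFrobeniusEquiv R p n).symm
  have hφ : pRoot p n = φ := pRoot_eq_iterateFrobeniusEquiv_symm n
  have hPn : P n = (pRoot p n x - pRoot p n y) * pRoot p n c := by
    rw [← pRoot_pow_p_pow n (P n), ← hcoeff, hfactor, hφ, map_mul, map_sub]
  have hc' : pRoot p n c ∈ Subring.closure {pRoot p n x, pRoot p n y} := by
    simpa only [hφ] using φ.apply_mem_closure_pair hc
  have hx : pRoot p n x ∈ Subring.closure {pRoot p n x, pRoot p n y} :=
    Subring.subset_closure (Set.mem_insert _ _)
  have hy : pRoot p n y ∈ Subring.closure {pRoot p n x, pRoot p n y} :=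
    Subring.subset_closure (Set.mem_insert_of_mem _ rfl)
  exact ⟨hPn ▸ mul_mem (sub_mem hx hy) hc', _, hc', hPn⟩
end

section
/- Let $B$ be a $p$-adically complete and separated commutative ring and let $B\langle U \rangle_{pd}$ denote the $p$-adic completion of the divided power polynomial algebra $B[U]_{pd}$ over $B$ in one variable. Let $b \in B$ be topologically nilpotent. Then the complex $0 \to B \to B\langle U \rangle_{pd} \xrightarrow{(1+bU)\frac{\partial}{\partial U}} B\langle U \rangle_{pd} \to 0$ is exact, where $\frac{\partial}{\partial U}$ is the divided-power derivative sending $U^{[n]}$ to $U^{[n-1]}$. -/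
/- The operator is `((1 + bU) ∂f)ₙ = fₙ₊₁ + n b fₙ`, so it kills exactly the constants and
`(1 + bU) ∂f = g` is solved recursively by `f₀ = 0`, `fₙ₊₁ = gₙ - n b fₙ`. Unwinding the recursion
from an index `N` past which `g` is divisible by `pᵐ`, the coefficient `f_{N+k+1}` is congruent
modulo `pᵐ` to a multiple of `b^(k+1)`, which is divisible by `pᵐ` once `k` is large since `b` is
topologically nilpotent; hence `f` again has coefficients tending to `0`. -/

/- We model the `p`-adic completion `B⟨U⟩_pd` of the free divided power algebra `B[U]_pd`
by coefficient sequences: an element `∑ bₙ U^[n]` is the sequence `n ↦ bₙ`, and it lies in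
the completion iff the coefficients tend to `0` `p`-adically. Multiplication is determined
by `U^[m] U^[n] = (m+n choose n) U^[m+n]`. -/

/-- Multiplication of divided power series: `(f*g)ₙ = ∑_{i+j=n} (n choose i) fᵢ gⱼ`. -/
def pdMul {B : Type*} [CommRing B] (f g : ℕ → B) : ℕ → B :=
  fun n => ∑ ij ∈ Finset.HasAntidiagonal.antidiagonal n, (n.choose ij.1 : B) * f ij.1 * g ij.2

/-- The constant divided power series `b`. -/
def pdC {B : Type*} [CommRing B] (b : B) : ℕ → B :=
  fun n => if n = 0 then b else 0

/-- The divided power derivative `∂/∂U`, sending `U^[n]` to `U^[n-1]`. -/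
def pdDeriv {B : Type*} [CommRing B] (f : ℕ → B) : ℕ → B :=
  fun n => f (n + 1)

/-- The element `1 + bU` of the divided power series ring. -/
def pdOnePlusBU {B : Type*} [CommRing B] (b : B) : ℕ → B :=
  fun n => if n = 0 then 1 else if n = 1 then b else 0

/-- The operator `(1 + bU) ∂/∂U`. -/
def pdOpL {B : Type*} [CommRing B] (b : B) (f : ℕ → B) : ℕ → B :=
  pdMul (pdOnePlusBU b) (pdDeriv f)

/-- A divided power series lies in the `p`-adic completion `B⟨U⟩_pd` iff its coefficients
tend to `0` `p`-adically. -/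
def pdTendsZero {B : Type*} [CommRing B] (p : ℕ) (f : ℕ → B) : Prop :=
  ∀ m : ℕ, ∃ N : ℕ, ∀ n ≥ N, f n ∈ Ideal.span {(p : B) ^ m}

section DividedPowerSeries

variable {B : Type*} [CommRing B]

lemma pdOpL_apply (b : B) (f : ℕ → B) (n : ℕ) :
    pdOpL b f n = f (n + 1) + n * b * f n := by
  unfold pdOpL pdMul pdOnePlusBU pdDeriv
  rw [Finset.Nat.sum_antidiagonal_eq_sum_range_succ_mk]
  cases n with
  | zero => simp
  | succ m =>
    rw [Finset.sum_range_succ', Finset.sum_range_succ']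
    simp only [Nat.add_eq_zero_iff, one_ne_zero, and_false, and_self, ↓reduceIte, Nat.add_eq_right,
      mul_zero, Nat.reduceSubDiff, zero_mul, Finset.sum_const_zero, zero_add, Nat.choose_one_right,
      Nat.cast_add, Nat.cast_one, add_tsub_cancel_right, Nat.choose_zero_right, mul_one, tsub_zero,
      one_mul]
    ring

lemma pdC_injective : Function.Injective (pdC (B := B)) :=
  fun a a' h => by simpa [pdC] using congrFun h 0

lemma pdOpL_eq_zero_iff (b : B) (f : ℕ → B) :
    pdOpL b f = 0 ↔ ∃ c : B, f = pdC c := by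
  constructor
  · intro h
    have succ_eq_zero : ∀ n : ℕ, f (n + 1) = 0 := by
      intro n
      induction n with
      | zero => simpa [pdOpL_apply] using congrFun h 0
      | succ m ih => simpa [pdOpL_apply, ih] using congrFun h (m + 1)
    refine ⟨f 0, funext fun n => ?_⟩
    cases n with
    | zero => simp [pdC]
    | succ m => simp [pdC, succ_eq_zero m]
  · rintro ⟨c, rfl⟩
    funext n
    cases n <;> simp [pdOpL_apply, pdC]

def pdSolve (b : B) (g : ℕ → B) : ℕ → B
  | 0 => 0
  | n + 1 => g n - n * b * pdSolve b g n

lemma pdOpL_pdSolve (b : B) (g : ℕ → B) : pdOpL b (pdSolve b g) = g := by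
  funext n
  rw [pdOpL_apply, pdSolve]
  ring

lemma exists_pdSolve_sub_mul_pow_mem (b : B) {g : ℕ → B} {I : Ideal B} {N : ℕ}
    (hg : ∀ n ≥ N, g n ∈ I) (k : ℕ) :
    ∃ c : B, pdSolve b g (N + k + 1) - c * b ^ (k + 1) ∈ I := by
  induction k with
  | zero =>
    refine ⟨-(N * pdSolve b g N), ?_⟩
    convert hg N le_rfl using 1
    simp only [pdSolve]
    ring
  | succ k ih =>
    obtain ⟨c, hc⟩ := ih
    refine ⟨-((N + k + 1 : ℕ) * c), ?_⟩
    have hrec : pdSolve b g (N + (k + 1) + 1) - -((N + k + 1 : ℕ) * c) * b ^ (k + 1 + 1) =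
        g (N + k + 1) - ((N + k + 1 : ℕ) * b) * (pdSolve b g (N + k + 1) - c * b ^ (k + 1)) := by
      rw [show N + (k + 1) + 1 = N + k + 1 + 1 by ring, pdSolve]
      ring
    rw [hrec]
    exact I.sub_mem (hg _ (by omega)) (I.mul_mem_left _ hc)

lemma pdTendsZero_pdSolve {p : ℕ} {b : B}
    (hb : ∀ m : ℕ, ∃ N : ℕ, ∀ n ≥ N, b ^ n ∈ Ideal.span {(p : B) ^ m})
    {g : ℕ → B} (hg : pdTendsZero p g) : pdTendsZero p (pdSolve b g) := by
  intro m
  obtain ⟨Ng, hNg⟩ := hg m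
  obtain ⟨Nb, hNb⟩ := hb m
  refine ⟨Ng + Nb + 1, fun n hn => ?_⟩
  obtain ⟨c, hc⟩ := exists_pdSolve_sub_mul_pow_mem b hNg (n - Ng - 1)
  rw [show Ng + (n - Ng - 1) + 1 = n by omega] at hc
  simpa using Ideal.add_mem _ hc (Ideal.mul_mem_left _ c (hNb (n - Ng - 1 + 1) (by omega)))

end DividedPowerSeries

theorem stmt7_general (p : ℕ) (B : Type*) [CommRing B]
    (b : B) (hb : ∀ m : ℕ, ∃ N : ℕ, ∀ n ≥ N, b ^ n ∈ Ideal.span {(p : B) ^ m}) :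
    Function.Injective (pdC (B := B)) ∧
      (∀ f : ℕ → B, pdTendsZero p f →
        (pdOpL b f = (fun _ => (0 : B)) ↔ ∃ c : B, f = pdC c)) ∧
      (∀ g : ℕ → B, pdTendsZero p g →
        ∃ f : ℕ → B, pdTendsZero p f ∧ pdOpL b f = g) :=
  ⟨pdC_injective, fun f _ => pdOpL_eq_zero_iff b f,
    fun g hg => ⟨pdSolve b g, pdTendsZero_pdSolve hb hg, pdOpL_pdSolve b g⟩⟩

/-- Let `B` be a `p`-adically complete and separated commutative ring and
`b ∈ B` topologically nilpotent. Then the complex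
`0 → B → B⟨U⟩_pd → B⟨U⟩_pd → 0`, with second map the inclusion of constants and third map
`(1+bU) ∂/∂U`, is exact: the inclusion of constants is injective, its image is exactly the
kernel of `(1+bU) ∂/∂U` on `B⟨U⟩_pd`, and `(1+bU) ∂/∂U` is surjective on `B⟨U⟩_pd`. -/
theorem stmt7 (p : ℕ) (hp : p.Prime) (B : Type*) [CommRing B]
    (hB : IsAdicComplete (Ideal.span {(p : B)}) B)
    (b : B) (hb : ∀ m : ℕ, ∃ N : ℕ, ∀ n ≥ N, b ^ n ∈ Ideal.span {(p : B) ^ m}) :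
    Function.Injective (pdC (B := B)) ∧
      (∀ f : ℕ → B, pdTendsZero p f →
        (pdOpL b f = (fun _ => (0 : B)) ↔ ∃ c : B, f = pdC c)) ∧
      (∀ g : ℕ → B, pdTendsZero p g →
        ∃ f : ℕ → B, pdTendsZero p f ∧ pdOpL b f = g) :=
  stmt7_general p B b hb
end

section
/- Let $B$ be a $p$-adically complete separated ring, $u \in B^\times$ a unit. Consider $D = B\langle U_1, \dots, U_d\rangle_{pd}$ (the $p$-adically completed free pd-algebra) with the $B$-linear derivation $d = -\sum_{i=1}^d u \frac{\partial}{\partial U_i} \otimes dU_i : D \to \bigoplus_{i=1}^d D \cdot dU_i$. Then the augmented de Rham (Koszul) complex $0 \to B \to D \to \bigoplus_i D\, dU_i \to \bigwedge^2(\bigoplus_i D\, dU_i) \to \cdots$ is exact; equivalently, the Koszul complex $K(D; u\partial_{U_1}, \dots, u\partial_{U_d})$ has cohomology $B$ concentrated in degree $0$. -/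
/- We model the `p`-adic completion `D = B⟨U_1,…,U_d⟩_pd` of the free divided power
algebra by coefficient functions `(Fin d →₀ ℕ) → B` (coefficient of the pd-monomial
`U^[k]`), completed elements being those whose coefficients tend to `0` `p`-adically.
The total de Rham/Koszul complex `D → ⊕ᵢ D dUᵢ → Λ² → ⋯` for the differential
`d = -∑ᵢ u ∂/∂Uᵢ ⊗ dUᵢ` is modelled on `W := Finset (Fin d) → ((Fin d →₀ ℕ) → B)`
(the component at `S` of cardinality `k` being the coefficient of `dU_S` in degree `k`),
with the usual Koszul signs. -/

/-- Coefficients tending to zero `p`-adically. -/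
def mpdTendsZero {σ : Type*} {B : Type*} [CommRing B] (p : ℕ) (f : (σ →₀ ℕ) → B) : Prop :=
  ∀ m : ℕ, {k : σ →₀ ℕ | f k ∉ Ideal.span {(p : B) ^ m}}.Finite

/-- The total differential `d = -∑ᵢ u ∂/∂Uᵢ ⊗ dUᵢ` of the de Rham (Koszul) complex, with
Koszul signs: `(dω)_S = ∑_{i ∈ S} (-1)^{#{j ∈ S : j < i}} (-u ∂/∂Uᵢ) ω_{S \ {i}}`, where
`(∂/∂Uᵢ f)(k) = f (k + Eᵢ)`. -/
noncomputable def koszulD {B : Type*} [CommRing B] {d : ℕ} (u : B)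
    (ω : Finset (Fin d) → ((Fin d →₀ ℕ) → B)) :
    Finset (Fin d) → ((Fin d →₀ ℕ) → B) :=
  fun S k => ∑ i ∈ S,
    (-1 : B) ^ ((S.filter (fun j => j < i)).card) *
      (-(u * ω (S.erase i) (k + Finsupp.single i 1)))

open Classical in
/-- The inclusion `B → W` of constants in degree `0`. -/
noncomputable def koszulC {B : Type*} [CommRing B] {d : ℕ} (c : B) :
    Finset (Fin d) → ((Fin d →₀ ℕ) → B) :=
  fun S k => if S = ∅ ∧ k = 0 then c else 0

/-! Each variable `Uᵢ` gives a contracting homotopy `hᵢ`, built from `u⁻¹` and the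
pd-antiderivative `U^[n] ↦ U^[n+1]` (a shift of coefficients), with `d hᵢ + hᵢ d = 1 - Pᵢ`,
where `Pᵢ` keeps the part of a form involving neither `Uᵢ` nor `dUᵢ` and commutes with `d`.
Composing over all variables gives `d H + H d = 1 - P` with `P` the projection onto the
constants `B`, so every cocycle is a constant plus a coboundary. Shifting coefficients
preserves their `p`-adic convergence to `0`, so `H` preserves the completion. -/

open Finset

lemma Finset.sum_sum_erase_eq_zero {ι M : Type*} [DecidableEq ι] [AddCommGroup M]
    {S : Finset ι} {F : ι → ι → M} (hF : ∀ i ∈ S, ∀ j ∈ S, i ≠ j → F i j = -F j i) :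
    ∑ i ∈ S, ∑ j ∈ S.erase i, F i j = 0 := by
  rw [sum_sigma']
  refine sum_involution (fun x _ => ⟨x.2, x.1⟩) ?_ ?_ ?_ (fun _ _ => rfl)
  · rintro ⟨i, j⟩ hx
    obtain ⟨hi, hji, hj⟩ : i ∈ S ∧ j ≠ i ∧ j ∈ S := by simpa using hx
    simp [hF i hi j hj hji.symm]
  · rintro ⟨i, j⟩ hx - h
    exact (mem_erase.mp (mem_sigma.mp hx).2).1 (congrArg Sigma.fst h)
  · rintro ⟨i, j⟩ hx
    obtain ⟨hi, hji, hj⟩ : i ∈ S ∧ j ≠ i ∧ j ∈ S := by simpa using hx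
    simpa using ⟨hj, hji.symm, hi⟩

abbrev KoszulCochain (B : Type*) (d : ℕ) : Type _ := Finset (Fin d) → (Fin d →₀ ℕ) → B

section Koszul

variable {B : Type*} [CommRing B] {d : ℕ}

def koszulSign (S : Finset (Fin d)) (i : Fin d) : B := (-1) ^ #{j ∈ S | j < i}

lemma koszulD_apply (u : B) (ω : KoszulCochain B d) (S : Finset (Fin d))
    (k : Fin d →₀ ℕ) :
    koszulD u ω S k = ∑ i ∈ S, koszulSign S i * -(u * ω (S.erase i) (k + Finsupp.single i 1)) :=
  rfl

lemma koszulSign_mul_self (S : Finset (Fin d)) (i : Fin d) :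
    (koszulSign S i : B) * koszulSign S i = 1 := by
  rw [koszulSign, ← pow_add, ← two_mul, pow_mul, neg_one_sq, one_pow]

section Signs

variable {S : Finset (Fin d)} {i j : Fin d}

lemma koszulSign_erase_of_not_lt (h : ¬ j < i) :
    (koszulSign (S.erase j) i : B) = koszulSign S i := by
  rw [koszulSign, filter_erase, erase_eq_of_notMem (by simp [h]), koszulSign]

lemma koszulSign_erase_of_lt (hj : j ∈ S) (h : j < i) :
    (koszulSign (S.erase j) i : B) = -koszulSign S i := by
  have hpos : 0 < #{l ∈ S | l < i} := card_pos.mpr ⟨j, mem_filter.mpr ⟨hj, h⟩⟩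
  rw [koszulSign, koszulSign, filter_erase, card_erase_of_mem (mem_filter.mpr ⟨hj, h⟩),
    ← Nat.sub_add_cancel hpos, pow_succ, Nat.add_sub_cancel]
  ring

lemma koszulSign_insert_of_not_lt (h : ¬ j < i) :
    (koszulSign (insert j S) i : B) = koszulSign S i := by
  rw [koszulSign, filter_insert, if_neg h, koszulSign]

lemma koszulSign_insert_of_lt (hj : j ∉ S) (h : j < i) :
    (koszulSign (insert j S) i : B) = -koszulSign S i := by
  have h' := koszulSign_erase_of_lt (B := B) (mem_insert_self j S) h
  rw [erase_insert hj] at h'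
  rw [h', neg_neg]

lemma koszulSign_mul_erase_antisymm (hi : i ∈ S) (hj : j ∈ S) (hij : i ≠ j) :
    (koszulSign S i : B) * koszulSign (S.erase i) j =
      -(koszulSign S j * koszulSign (S.erase j) i) := by
  rcases hij.lt_or_gt with h | h
  · rw [koszulSign_erase_of_lt hi h, koszulSign_erase_of_not_lt h.not_gt]; ring
  · rw [koszulSign_erase_of_not_lt h.not_gt, koszulSign_erase_of_lt hj h]; ring

lemma koszulSign_mul_erase_eq_neg_insert (hi : i ∉ S) (hj : j ∈ S) :
    (koszulSign S j : B) * koszulSign (S.erase j) i =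
      -(koszulSign S i * koszulSign (insert i S) j) := by
  rcases (ne_of_mem_of_not_mem hj hi).lt_or_gt with h | h
  · rw [koszulSign_erase_of_lt hj h, koszulSign_insert_of_not_lt h.not_gt]; ring
  · rw [koszulSign_erase_of_not_lt h.not_gt, koszulSign_insert_of_lt hi h]; ring

end Signs

lemma koszulD_add (u : B) (ω η : KoszulCochain B d) :
    koszulD u (ω + η) = koszulD u ω + koszulD u η := by
  funext S k
  simp only [koszulD_apply, Pi.add_apply, ← sum_add_distrib]
  exact sum_congr rfl fun i _ => by ring

lemma koszulD_koszulD (u : B) (ω : KoszulCochain B d) :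
    koszulD u (koszulD u ω) = 0 := by
  funext S k
  simp only [koszulD_apply, mul_neg, mul_sum, ← sum_neg_distrib, Pi.zero_apply]
  refine sum_sum_erase_eq_zero fun i hi j hj hij => ?_
  rw [erase_right_comm, add_right_comm k]
  linear_combination (u * u * ω ((S.erase j).erase i) (k + Finsupp.single j 1 + Finsupp.single i 1))
    * koszulSign_mul_erase_antisymm (B := B) hi hj hij

lemma koszulD_koszulC (u c : B) : koszulD u (koszulC (d := d) c) = 0 := by
  funext S k
  refine sum_eq_zero fun i _ => ?_
  have : k + Finsupp.single i 1 ≠ 0 := fun h => by simpa using congrArg (· i) h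
  simp [koszulC, this]

noncomputable def pdIntegral (i : Fin d) (f : (Fin d →₀ ℕ) → B) : (Fin d →₀ ℕ) → B :=
  fun k => if k i = 0 then 0 else f (k - Finsupp.single i 1)

lemma pdIntegral_of_eq_zero {i : Fin d} {k : Fin d →₀ ℕ} (h : k i = 0) (f : (Fin d →₀ ℕ) → B) :
    pdIntegral i f k = 0 :=
  if_pos h

lemma pdIntegral_of_ne_zero {i : Fin d} {k : Fin d →₀ ℕ} (h : k i ≠ 0) (f : (Fin d →₀ ℕ) → B) :
    pdIntegral i f k = f (k - Finsupp.single i 1) :=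
  if_neg h

lemma pdIntegral_add_single (i : Fin d) (f : (Fin d →₀ ℕ) → B) (k : Fin d →₀ ℕ) :
    pdIntegral i f (k + Finsupp.single i 1) = f k := by
  rw [pdIntegral_of_ne_zero (by simp), add_tsub_cancel_right]

def koszulProj (l : List (Fin d)) (ω : KoszulCochain B d) : KoszulCochain B d :=
  fun S k => if ∀ i ∈ l, i ∉ S ∧ k i = 0 then ω S k else 0

lemma koszulProj_nil (ω : KoszulCochain B d) : koszulProj [] ω = ω := by
  funext S k
  simp [koszulProj]

lemma koszulProj_cons (i : Fin d) (l : List (Fin d)) (ω : KoszulCochain B d) :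
    koszulProj (i :: l) ω = koszulProj [i] (koszulProj l ω) := by
  funext S k
  simp only [koszulProj, List.forall_mem_cons, List.not_mem_nil, IsEmpty.forall_iff,
    implies_true, and_true, ite_and]

lemma koszulProj_finRange (ω : KoszulCochain B d) :
    koszulProj (List.finRange d) ω = koszulC (ω ∅ 0) := by
  funext S k
  have : (∀ i ∈ List.finRange d, i ∉ S ∧ k i = 0) ↔ S = ∅ ∧ k = 0 := by
    simp [forall_and, eq_empty_iff_forall_notMem, Finsupp.ext_iff]
  simp only [koszulProj, koszulC, this]
  split_ifs with h
  · rw [h.1, h.2]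
  · rfl

lemma koszulD_koszulProj_singleton (u : B) (i : Fin d) (ω : KoszulCochain B d) :
    koszulD u (koszulProj [i] ω) = koszulProj [i] (koszulD u ω) := by
  funext S k
  have hterm : ∀ j ∈ S,
      (i ∉ S.erase j ∧ (k + Finsupp.single j 1 : Fin d →₀ ℕ) i = 0 ↔ i ∉ S ∧ k i = 0) := by
    intro j hj
    by_cases hji : j = i
    · subst hji
      simp [hj]
    · simp [Ne.symm hji]
  by_cases h : i ∉ S ∧ k i = 0
  · simp only [koszulD_apply, koszulProj, List.mem_singleton, forall_eq, if_pos h]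
    exact sum_congr rfl fun j hj => by rw [if_pos ((hterm j hj).mpr h)]
  · simp only [koszulD_apply, koszulProj, List.mem_singleton, forall_eq, if_neg h]
    exact sum_eq_zero fun j hj => by rw [if_neg (mt (hterm j hj).mp h)]; ring

lemma koszulD_koszulProj (u : B) (l : List (Fin d)) (ω : KoszulCochain B d) :
    koszulD u (koszulProj l ω) = koszulProj l (koszulD u ω) := by
  induction l with
  | nil => simp only [koszulProj_nil]
  | cons i l ih => rw [koszulProj_cons, koszulD_koszulProj_singleton, ih, ← koszulProj_cons]

noncomputable def koszulHomotopy (v : B) (i : Fin d) (ω : KoszulCochain B d) :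
    KoszulCochain B d :=
  fun S k => if i ∈ S then 0 else koszulSign S i * -(v * pdIntegral i (ω (insert i S)) k)

lemma koszulHomotopy_zero (v : B) (i : Fin d) :
    koszulHomotopy v i (0 : KoszulCochain B d) = 0 := by
  funext S k
  simp [koszulHomotopy, pdIntegral]

lemma koszulD_koszulHomotopy_add_of_mem {u v : B} (huv : u * v = 1) {i : Fin d}
    (ω : KoszulCochain B d) {S : Finset (Fin d)} (hi : i ∈ S) (k : Fin d →₀ ℕ) :
    koszulD u (koszulHomotopy v i ω) S k + koszulHomotopy v i (koszulD u ω) S k = ω S k := by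
  have hother : ∀ j ∈ S, j ≠ i → koszulHomotopy v i ω (S.erase j) (k + Finsupp.single j 1) = 0 :=
    fun j _ hji => if_pos (mem_erase.mpr ⟨hji.symm, hi⟩)
  rw [koszulHomotopy, if_pos hi, add_zero, koszulD_apply,
    sum_eq_single_of_mem i hi fun j hj hji => by rw [hother j hj hji]; ring,
    koszulHomotopy, if_neg (notMem_erase i S), insert_erase hi, pdIntegral_add_single,
    koszulSign_erase_of_not_lt (lt_irrefl i)]
  linear_combination (u * v * ω S k) * koszulSign_mul_self (B := B) S i + ω S k * huv

lemma koszulD_koszulHomotopy_add_of_ne_zero {u v : B} (huv : u * v = 1) {i : Fin d}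
    (ω : KoszulCochain B d) {S : Finset (Fin d)} (hi : i ∉ S) {k : Fin d →₀ ℕ}
    (hk : k i ≠ 0) :
    koszulD u (koszulHomotopy v i ω) S k + koszulHomotopy v i (koszulD u ω) S k = ω S k := by
  have hle : Finsupp.single i 1 ≤ k := Finsupp.single_le_iff.mpr (Nat.one_le_iff_ne_zero.mpr hk)
  set k' := k - Finsupp.single i 1
  have hcross : ∀ j ∈ S,
      koszulSign S j * -(u * koszulHomotopy v i ω (S.erase j) (k + Finsupp.single j 1)) =
        koszulSign S i * (v * (koszulSign (insert i S) j *
          -(u * ω ((insert i S).erase j) (k' + Finsupp.single j 1)))) := by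
    intro j hj
    have hij : i ≠ j := ne_of_mem_of_not_mem hj hi |>.symm
    rw [koszulHomotopy, if_neg fun h => hi (mem_of_mem_erase h),
      pdIntegral_of_ne_zero (by simp [hij, hk]),
      ← tsub_add_eq_add_tsub hle, ← erase_insert_of_ne hij]
    linear_combination (u * v * ω ((insert i S).erase j) (k' + Finsupp.single j 1)) *
      koszulSign_mul_erase_eq_neg_insert (B := B) hi hj
  rw [koszulD_apply, sum_congr rfl hcross, koszulHomotopy, if_neg hi, pdIntegral_of_ne_zero hk,
    koszulD_apply, sum_insert hi, koszulSign_insert_of_not_lt (lt_irrefl i), erase_insert hi,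
    tsub_add_cancel_of_le hle, ← mul_sum, ← mul_sum]
  linear_combination (u * v * ω S k) * koszulSign_mul_self (B := B) S i + ω S k * huv

lemma koszulD_koszulHomotopy_add (u v : B) (huv : u * v = 1) (i : Fin d)
    (ω : KoszulCochain B d) :
    koszulD u (koszulHomotopy v i ω) + koszulHomotopy v i (koszulD u ω) = ω - koszulProj [i] ω := by
  funext S k
  simp only [Pi.add_apply, Pi.sub_apply]
  by_cases hi : i ∈ S
  · rw [koszulD_koszulHomotopy_add_of_mem huv ω hi k, koszulProj, if_neg (by simp [hi]), sub_zero]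
  by_cases hk : k i = 0
  · have hD : koszulD u (koszulHomotopy v i ω) S k = 0 := by
      refine sum_eq_zero fun j hj => ?_
      have hij : i ≠ j := ne_of_mem_of_not_mem hj hi |>.symm
      simp [koszulHomotopy, pdIntegral, hij, hk]
    simp [hD, koszulHomotopy, pdIntegral, koszulProj, hi, hk]
  · rw [koszulD_koszulHomotopy_add_of_ne_zero huv ω hi hk, koszulProj, if_neg (by simp [hk]),
      sub_zero]

lemma koszulD_zero (u : B) : koszulD u (0 : KoszulCochain B d) = 0 := by
  funext S k
  simp [koszulD_apply]

lemma koszulProj_zero (l : List (Fin d)) :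
    koszulProj l (0 : KoszulCochain B d) = 0 := by
  funext S k
  simp [koszulProj]

noncomputable def koszulHomotopyList (v : B) :
    List (Fin d) → KoszulCochain B d → KoszulCochain B d
  | [], _ => 0
  | i :: l, ω => koszulHomotopyList v l ω + koszulHomotopy v i (koszulProj l ω)

lemma koszulHomotopyList_zero (v : B) (l : List (Fin d)) :
    koszulHomotopyList v l (0 : KoszulCochain B d) = 0 := by
  induction l with
  | nil => rfl
  | cons i l ih => rw [koszulHomotopyList, ih, koszulProj_zero, koszulHomotopy_zero, add_zero]

lemma koszulD_koszulHomotopyList_add (u v : B) (huv : u * v = 1) (l : List (Fin d))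
    (ω : KoszulCochain B d) :
    koszulD u (koszulHomotopyList v l ω) + koszulHomotopyList v l (koszulD u ω) =
      ω - koszulProj l ω := by
  induction l with
  | nil => rw [koszulHomotopyList, koszulHomotopyList, koszulD_zero, koszulProj_nil]; abel
  | cons i l ih =>
    rw [koszulHomotopyList, koszulHomotopyList, koszulD_add, ← koszulD_koszulProj,
      koszulProj_cons]
    linear_combination ih + koszulD_koszulHomotopy_add u v huv i (koszulProj l ω)

end Koszul

section Completion

variable {σ B : Type*} [CommRing B] {p : ℕ}

lemma mpdTendsZero.of_dvd {f g : (σ →₀ ℕ) → B} (hg : mpdTendsZero p g) (h : ∀ k, g k ∣ f k) :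
    mpdTendsZero p f := fun m =>
  (hg m).subset fun k hk hgk => hk (Ideal.mem_span_singleton.mpr
    ((Ideal.mem_span_singleton.mp hgk).trans (h k)))

lemma mpdTendsZero.zero : mpdTendsZero p (0 : (σ →₀ ℕ) → B) := fun _ =>
  Set.finite_empty.subset fun _ hk => hk (Ideal.zero_mem _)

lemma mpdTendsZero.add {f g : (σ →₀ ℕ) → B} (hf : mpdTendsZero p f) (hg : mpdTendsZero p g) :
    mpdTendsZero p (f + g) := fun m =>
  ((hf m).union (hg m)).subset fun k hk => by
    by_contra h
    simp only [Set.mem_union, Set.mem_ofPred_eq, not_or, not_not] at h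
    exact hk (Ideal.add_mem _ h.1 h.2)

variable {d : ℕ}

lemma mpdTendsZero.pdIntegral {f : (Fin d →₀ ℕ) → B} (hf : mpdTendsZero p f) (i : Fin d) :
    mpdTendsZero p (pdIntegral i f) := fun m =>
  ((hf m).image (· + Finsupp.single i 1)).subset fun k hk => by
    by_cases h : k i = 0
    · exact absurd (by rw [pdIntegral_of_eq_zero h]; exact Ideal.zero_mem _) hk
    · refine ⟨k - Finsupp.single i 1, ?_, tsub_add_cancel_of_le ?_⟩
      · simpa [pdIntegral_of_ne_zero h] using hk
      · exact Finsupp.single_le_iff.mpr (Nat.one_le_iff_ne_zero.mpr h)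

variable {ω : KoszulCochain B d}

lemma koszulProj_mpdTendsZero (hω : ∀ S, mpdTendsZero p (ω S)) (l : List (Fin d))
    (S : Finset (Fin d)) : mpdTendsZero p (koszulProj l ω S) :=
  (hω S).of_dvd fun k => by
    unfold koszulProj
    split_ifs
    exacts [dvd_rfl, dvd_zero _]

lemma koszulHomotopy_mpdTendsZero (hω : ∀ S, mpdTendsZero p (ω S)) (v : B) (i : Fin d)
    (S : Finset (Fin d)) : mpdTendsZero p (koszulHomotopy v i ω S) :=
  ((hω (insert i S)).pdIntegral i).of_dvd fun k => by
    unfold koszulHomotopy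
    split_ifs
    exacts [dvd_zero _, Dvd.dvd.mul_left (dvd_neg.mpr (dvd_mul_left _ _)) _]

lemma koszulHomotopyList_mpdTendsZero (hω : ∀ S, mpdTendsZero p (ω S)) (v : B)
    (l : List (Fin d)) (S : Finset (Fin d)) : mpdTendsZero p (koszulHomotopyList v l ω S) := by
  induction l with
  | nil => exact mpdTendsZero.zero
  | cons i l ih =>
    exact ih.add (koszulHomotopy_mpdTendsZero (koszulProj_mpdTendsZero hω l) v i S)

end Completion

theorem stmt13_general (p : ℕ) (B : Type*) [CommRing B]
    (d : ℕ) (u : B) (hu : IsUnit u) :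
    Function.Injective (koszulC (B := B) (d := d)) ∧
      (∀ c : B, koszulD u (koszulC (d := d) c) = fun _ _ => 0) ∧
      (∀ ω : Finset (Fin d) → ((Fin d →₀ ℕ) → B),
        (∀ S, mpdTendsZero p (ω S)) → koszulD u (koszulD u ω) = fun _ _ => 0) ∧
      (∀ ω : Finset (Fin d) → ((Fin d →₀ ℕ) → B),
        (∀ S, mpdTendsZero p (ω S)) → koszulD u ω = (fun _ _ => 0) →
          ∃ (c : B) (η : Finset (Fin d) → ((Fin d →₀ ℕ) → B)),
            (∀ S, mpdTendsZero p (η S)) ∧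
            ω = fun S k => koszulC c S k + koszulD u η S k) := by
  obtain ⟨v, huv⟩ := hu.exists_right_inv
  refine ⟨fun c₁ c₂ h => by simpa [koszulC] using congrFun (congrFun h ∅) 0,
    koszulD_koszulC u, fun ω _ => koszulD_koszulD u ω, fun ω hω hcocycle => ?_⟩
  refine ⟨ω ∅ 0, koszulHomotopyList v (List.finRange d) ω,
    koszulHomotopyList_mpdTendsZero hω v _, ?_⟩
  have h := koszulD_koszulHomotopyList_add u v huv (List.finRange d) ω
  rw [show koszulD u ω = 0 from hcocycle, koszulHomotopyList_zero, add_zero,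
    koszulProj_finRange] at h
  change ω = koszulC (ω ∅ 0) + koszulD u _
  rw [h]
  abel

/-- Let `B` be a `p`-adically complete separated ring and `u ∈ B` a
unit. The augmented de Rham (Koszul) complex
`0 → B → D → ⊕ᵢ D dUᵢ → Λ²(⊕ᵢ D dUᵢ) → ⋯` for `d = -∑ᵢ u ∂/∂Uᵢ ⊗ dUᵢ` on
`D = B⟨U_1,…,U_d⟩_pd` is exact; equivalently, on the total complex `W` restricted to the
completion: constants inject, `d ∘ (const) = 0`, `d ∘ d = 0`, and every completed cocycle
is a constant plus a completed coboundary (i.e. the cohomology is `B` in degree `0`). -/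
theorem stmt13 (p : ℕ) (hp : p.Prime) (B : Type*) [CommRing B]
    (hB : IsAdicComplete (Ideal.span {(p : B)}) B)
    (d : ℕ) (u : B) (hu : IsUnit u) :
    Function.Injective (koszulC (B := B) (d := d)) ∧
      (∀ c : B, koszulD u (koszulC (d := d) c) = fun _ _ => 0) ∧
      (∀ ω : Finset (Fin d) → ((Fin d →₀ ℕ) → B),
        (∀ S, mpdTendsZero p (ω S)) → koszulD u (koszulD u ω) = fun _ _ => 0) ∧
      (∀ ω : Finset (Fin d) → ((Fin d →₀ ℕ) → B),
        (∀ S, mpdTendsZero p (ω S)) → koszulD u ω = (fun _ _ => 0) →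
          ∃ (c : B) (η : Finset (Fin d) → ((Fin d →₀ ℕ) → B)),
            (∀ S, mpdTendsZero p (η S)) ∧
            ω = fun S k => koszulC c S k + koszulD u η S k) :=
  stmt13_general p B d u hu
end
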